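/- Let P be a nonempty finite index set, ε > 0, and for each i ∈ P let λ_i ≥ 0, q_i ≥ 0 and α_i > 0 be given. Let λ̃_1 < λ̃_2 < ... < λ̃_ũ be the distinct values among {λ_i : i ∈ P}, and for u = 1,...,ũ set C_u = {i ∈ P : λ_i ≤ λ̃_u} and γ̃_u = (Σ_{i∈C_u} α_i) / (Σ_{i∈C_u} q_i + ε), with γ̃_0 = 0. Consider f(γ) = Σ_{i∈P} [ max{γ, λ_i}·q_i − α_i·log max{γ, λ_i} ] + ε·γ on the domain D = {γ ≥ 0 : max{γ, λ_i} > 0 for all i ∈ P}. Then f attains its minimum over D, and every minimizer of f over D belongs to the finite set M₂ = {λ̃_1, ..., λ̃_ũ} ∪ {γ̃_0, γ̃_1, ..., γ̃_ũ} (intersected with D). -/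

import Mathlib

/-!
The objective tends to `+∞` as `γ → ∞` and, when some `λᵢ ≤ 0` (so that the domain is
`(0, ∞)`), also as `γ → 0⁺`; being continuous on the domain, it attains its minimum there.
A minimizer `γ > 0` different from all `λᵢ` is an interior point of differentiability, so
`f'(γ) = ∑_{λᵢ < γ} (qᵢ - αᵢ / γ) + ε = 0`. Since `ε > 0` the index set `{i | λᵢ < γ}` is
nonempty, hence equal to `{i | λᵢ ≤ λⱼ}` for its element `j` with largest `λⱼ`, and solving
the equation for `γ` gives the corresponding candidate ratio.
-/

open Finset Filter Topology Real

theorem exists_isMinOn_of_le_off_compact {α β : Type*} [LinearOrder α] [TopologicalSpace α]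
    [ClosedIicTopology α] [TopologicalSpace β] {f : β → α} {s K : Set β} (hK : IsCompact K)
    (hKs : K ⊆ s) (hf : ContinuousOn f K) {x₀ : β} (hx₀ : x₀ ∈ K)
    (hout : ∀ x ∈ s \ K, f x₀ ≤ f x) : ∃ x ∈ s, IsMinOn f s x := by
  obtain ⟨x, hxK, hx⟩ := hK.exists_isMinOn ⟨x₀, hx₀⟩ hf
  refine ⟨x, hKs hxK, fun y hy => ?_⟩
  by_cases hyK : y ∈ K
  exacts [hx hyK, (hx hx₀).trans (hout y ⟨hy, hyK⟩)]

theorem Finset.exists_filter_le_eq_filter_lt {ι β : Type*} [LinearOrder β] (s : Finset ι)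
    (f : ι → β) {b : β} (h : ∃ i ∈ s, f i < b) :
    ∃ j ∈ s, s.filter (fun i => f i ≤ f j) = s.filter (fun i => f i < b) := by
  obtain ⟨j, hj, hjmax⟩ :=
    (s.filter fun i => f i < b).exists_max_image f (by simpa [Finset.Nonempty] using h)
  rw [mem_filter] at hj
  exact ⟨j, hj.1, Finset.filter_congr fun i hi =>
    ⟨fun h => h.trans_lt hj.2, fun h => hjmax i (mem_filter.2 ⟨hi, h⟩)⟩⟩

theorem tendsto_mul_sub_mul_log_atTop {c : ℝ} (hc : 0 < c) (A : ℝ) :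
    Tendsto (fun x => c * x - A * log x) atTop atTop := by
  have hlog : Tendsto (fun x => c - A * (log x / x)) atTop (𝓝 c) := by
    simpa using (tendsto_pow_log_div_mul_add_atTop 1 0 1 one_ne_zero).const_mul A |>.const_sub c
  refine (tendsto_id.atTop_mul_pos hc hlog).congr' ?_
  filter_upwards [eventually_gt_atTop 0] with x hx
  simp only [id]
  field_simp

noncomputable section

namespace MaxPrior

def term (l q a γ : ℝ) : ℝ := max γ l * q - a * log (max γ l)

def objective {ι : Type*} [Fintype ι] (ε : ℝ) (lam q α : ι → ℝ) (γ : ℝ) : ℝ :=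
  (∑ i, term (lam i) (q i) (α i) γ) + ε * γ

def domain {ι : Type*} (lam : ι → ℝ) : Set ℝ := {γ | 0 ≤ γ ∧ ∀ i, 0 < max γ (lam i)}

section term

variable {l q a γ : ℝ}

theorem term_of_le (h : l ≤ γ) : term l q a γ = γ * q - a * log γ := by
  simp only [term, max_eq_left h]

theorem hasDerivAt_term (hγ : 0 < γ) (hl : l ≠ γ) :
    HasDerivAt (term l q a) (if l < γ then q - a / γ else 0) γ := by
  rcases hl.lt_or_gt with hlt | hgt
  · rw [if_pos hlt]
    have h := ((hasDerivAt_id γ).mul_const q).sub ((hasDerivAt_log hγ.ne').const_mul a)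
    rw [one_mul, ← div_eq_mul_inv] at h
    refine h.congr_of_eventuallyEq ?_
    filter_upwards [Ioi_mem_nhds hlt] with x hx using term_of_le hx.le
  · rw [if_neg hgt.not_gt]
    refine (hasDerivAt_const γ (term l q a l)).congr_of_eventuallyEq ?_
    filter_upwards [Iio_mem_nhds hgt] with x (hx : x < l)
    simp only [term, max_eq_right hx.le, max_self]

theorem neg_mul_log_le_term (hq : 0 ≤ q) (hγ : 0 ≤ γ) (hl : l ≤ γ) :
    -(a * log γ) ≤ term l q a γ := by
  rw [term_of_le hl]
  nlinarith [mul_nonneg hγ hq]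

theorem neg_mul_log_max_one_le_term (hq : 0 ≤ q) (ha : 0 ≤ a) (hγ : 0 < γ) (hγ1 : γ ≤ 1) :
    -(a * log (max 1 l)) ≤ term l q a γ := by
  have hpos : 0 < max γ l := lt_max_of_lt_left hγ
  have hlog : log (max γ l) ≤ log (max 1 l) := log_le_log hpos (max_le_max_right l hγ1)
  have := mul_le_mul_of_nonneg_left hlog ha
  unfold term
  nlinarith [mul_nonneg hpos.le hq]

end term

section domain

variable {ι : Type*} {lam : ι → ℝ}

theorem Ioi_subset_domain : Set.Ioi 0 ⊆ domain lam :=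
  fun _ hγ => ⟨le_of_lt hγ, fun _ => lt_max_of_lt_left hγ⟩

theorem Ici_subset_domain (h : ∀ i, 0 < lam i) : Set.Ici 0 ⊆ domain lam :=
  fun _ hγ => ⟨hγ, fun i => lt_max_of_lt_right (h i)⟩

theorem domain_subset_Ioi {i₀ : ι} (h : lam i₀ ≤ 0) : domain lam ⊆ Set.Ioi 0 := by
  intro γ hγ
  exact (lt_max_iff.1 (hγ.2 i₀)).resolve_right h.not_gt

end domain

section objective

variable {ι : Type*} [Fintype ι] {ε : ℝ} {lam q α : ι → ℝ}

theorem continuousOn_objective : ContinuousOn (objective ε lam q α) (domain lam) := by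
  refine (continuousOn_finsetSum _ fun i _ => ?_).add (continuousOn_const.mul continuousOn_id)
  have hmax : ContinuousOn (fun γ : ℝ => max γ (lam i)) (domain lam) :=
    (continuous_id.max continuous_const).continuousOn
  exact (hmax.mul continuousOn_const).sub
    (continuousOn_const.mul (hmax.log fun γ hγ => (hγ.2 i).ne'))

theorem hasDerivAt_objective {γ : ℝ} (hγ : 0 < γ) (hlam : ∀ i, lam i ≠ γ) :
    HasDerivAt (objective ε lam q α)
      ((∑ i ∈ univ.filter fun i => lam i < γ, (q i - α i / γ)) + ε) γ := by
  have h := (HasDerivAt.fun_sum (u := univ) fun i _ =>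
    hasDerivAt_term (q := q i) (a := α i) hγ (hlam i)).add ((hasDerivAt_id γ).const_mul ε)
  rwa [mul_one, ← Finset.sum_filter] at h

theorem objective_eq_of_forall_le {γ : ℝ} (hγ : ∀ i, lam i ≤ γ) :
    objective ε lam q α γ = ((∑ i, q i) + ε) * γ - (∑ i, α i) * log γ := by
  simp only [objective, term_of_le (hγ _), Finset.sum_sub_distrib, ← Finset.mul_sum,
    ← Finset.sum_mul]
  ring

theorem tendsto_objective_atTop (hε : 0 < ε) (hq : ∀ i, 0 ≤ q i) :
    Tendsto (objective ε lam q α) atTop atTop := by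
  have hc : 0 < (∑ i, q i) + ε := add_pos_of_nonneg_of_pos (Finset.sum_nonneg fun i _ => hq i) hε
  refine (tendsto_mul_sub_mul_log_atTop hc (∑ i, α i)).congr' ?_
  filter_upwards [eventually_all.2 fun i => eventually_ge_atTop (lam i)] with γ hγ
  exact (objective_eq_of_forall_le hγ).symm

theorem tendsto_objective_nhdsGT_zero (hε : 0 ≤ ε) (hq : ∀ i, 0 ≤ q i) (hα : ∀ i, 0 < α i)
    {i₀ : ι} (hi₀ : lam i₀ ≤ 0) : Tendsto (objective ε lam q α) (𝓝[>] 0) atTop := by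
  set b : ι → ℝ := fun i => -(α i * log (max 1 (lam i)))
  have hbound : ∀ γ ∈ Set.Ioc (0 : ℝ) 1,
      -(α i₀ * log γ) - b i₀ + ∑ i, b i ≤ objective ε lam q α γ := by
    rintro γ ⟨hγ0, hγ1⟩
    have hb : ∀ i, b i ≤ term (lam i) (q i) (α i) γ := fun i =>
      neg_mul_log_max_one_le_term (hq i) (hα i).le hγ0 hγ1
    -- all terms are bounded below on `(0, 1]`; the `i₀`-th one even by `-α i₀ log γ`
    have hsingle : term (lam i₀) (q i₀) (α i₀) γ - b i₀ ≤
        ∑ i, (term (lam i) (q i) (α i) γ - b i) :=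
      Finset.single_le_sum (fun i _ => sub_nonneg.2 (hb i)) (mem_univ i₀)
    have := neg_mul_log_le_term (a := α i₀) (hq i₀) hγ0.le (hi₀.trans hγ0.le)
    rw [Finset.sum_sub_distrib] at hsingle
    unfold objective
    nlinarith [mul_nonneg hε hγ0.le]
  have hlog : Tendsto (fun γ => -(α i₀ * log γ) - b i₀ + ∑ i, b i) (𝓝[>] 0) atTop := by
    refine tendsto_atTop_add_const_right _ _ (tendsto_atTop_add_const_right _ _ ?_)
    simpa [neg_mul] using tendsto_log_nhdsGT_zero.const_mul_atBot_of_neg (neg_neg_of_pos (hα i₀))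
  refine tendsto_atTop_mono' _ ?_ hlog
  filter_upwards [Ioc_mem_nhdsGT one_pos] using hbound

theorem exists_isMinOn_objective (hε : 0 < ε) (hq : ∀ i, 0 ≤ q i) (hα : ∀ i, 0 < α i) :
    ∃ γ ∈ domain lam, IsMinOn (objective ε lam q α) (domain lam) γ := by
  set f := objective ε lam q α
  obtain ⟨R, hR⟩ :=
    ((tendsto_objective_atTop hε hq).eventually_ge_atTop (f 1)).exists_forall_of_atTop
  obtain ⟨a, ha1, hsmall⟩ : ∃ a ≤ 1, Set.Icc a (max R 1) ⊆ domain lam ∧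
      ∀ γ ∈ domain lam, γ < a → f 1 ≤ f γ := by
    by_cases hpos : ∀ i, 0 < lam i
    · exact ⟨0, zero_le_one, fun γ hγ => Ici_subset_domain hpos hγ.1,
        fun γ hγ hγ0 => absurd hγ.1 hγ0.not_ge⟩
    obtain ⟨i₀, hi₀⟩ : ∃ i₀, lam i₀ ≤ 0 := by simpa using hpos
    obtain ⟨a, ha, haf⟩ := (mem_nhdsGT_iff_exists_Ioo_subset.1
      ((tendsto_objective_nhdsGT_zero hε.le hq hα hi₀).eventually_ge_atTop (f 1)))
    refine ⟨min a 1, min_le_right _ _,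
      fun γ hγ => Ioi_subset_domain ((lt_min ha one_pos).trans_le hγ.1),
      fun γ hγ hγa => haf ⟨domain_subset_Ioi hi₀ hγ, hγa.trans_le (min_le_left _ _)⟩⟩
  refine exists_isMinOn_of_le_off_compact isCompact_Icc hsmall.1
    (continuousOn_objective.mono hsmall.1) (x₀ := 1) ⟨ha1, le_max_right _ _⟩ ?_
  rintro γ ⟨hγ, hγK⟩
  rw [Set.mem_Icc, not_and_or, not_le, not_le] at hγK
  rcases hγK with hγa | hγR
  · exact hsmall.2 γ hγ hγa
  · exact hR γ (le_max_left _ _ |>.trans hγR.le)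

theorem exists_eq_ratio_of_isLocalMin (hε : 0 < ε) (hq : ∀ i, 0 ≤ q i) {γ : ℝ} (hγ : 0 < γ)
    (hlam : ∀ i, lam i ≠ γ) (hmin : IsLocalMin (objective ε lam q α) γ) :
    ∃ j, (∑ i ∈ univ.filter fun i => lam i ≤ lam j, α i) /
      ((∑ i ∈ univ.filter fun i => lam i ≤ lam j, q i) + ε) = γ := by
  set T := univ.filter fun i => lam i < γ
  have hzero := hmin.hasDerivAt_eq_zero (hasDerivAt_objective hγ hlam)
  have hT : ∃ i ∈ univ, lam i < γ := by
    by_contra! h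
    rw [Finset.filter_false_of_mem fun i hi => (h i hi).not_gt, Finset.sum_empty,
      zero_add] at hzero
    exact hε.ne' hzero
  obtain ⟨j, -, hj⟩ := univ.exists_filter_le_eq_filter_lt lam hT
  refine ⟨j, ?_⟩
  have hpos : 0 < (∑ i ∈ T, q i) + ε :=
    add_pos_of_nonneg_of_pos (Finset.sum_nonneg fun i _ => hq i) hε
  rw [hj, div_eq_iff hpos.ne']
  rw [Finset.sum_sub_distrib, ← Finset.sum_div] at hzero
  field_simp at hzero
  linarith

end objective

end MaxPrior

end

open MaxPrior in
theorem max_prior_gamma_update_minimizers_general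
    (ι : Type) [Fintype ι] (ε : ℝ) (hε : 0 < ε)
    (lam q α : ι → ℝ) (hq : ∀ i, 0 ≤ q i) (hα : ∀ i, 0 < α i) :
    let f : ℝ → ℝ := fun gam =>
      (∑ i : ι, (max gam (lam i) * q i - α i * Real.log (max gam (lam i)))) + ε * gam
    let D : Set ℝ := {gam | 0 ≤ gam ∧ ∀ i : ι, 0 < max gam (lam i)}
    let M : Set ℝ := Set.range lam ∪ {0} ∪
      Set.range (fun j : ι =>
        (∑ i ∈ Finset.univ.filter fun i => lam i ≤ lam j, α i) /
          ((∑ i ∈ Finset.univ.filter fun i => lam i ≤ lam j, q i) + ε))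
    (∃ gam ∈ D, ∀ μ ∈ D, f gam ≤ f μ) ∧
      ∀ gam ∈ D, (∀ μ ∈ D, f gam ≤ f μ) → gam ∈ M := by
  intro f D M
  refine ⟨exists_isMinOn_objective hε hq hα, fun γ hγD hγmin => ?_⟩
  rcases hγD.1.eq_or_lt with rfl | hγ
  · exact Or.inl (Or.inr rfl)
  by_cases hγlam : γ ∈ Set.range lam
  · exact Or.inl (Or.inl hγlam)
  have hloc : IsLocalMin (objective ε lam q α) γ :=
    IsMinOn.isLocalMin hγmin (Filter.mem_of_superset (Ioi_mem_nhds hγ) Ioi_subset_domain)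
  exact Or.inr (exists_eq_ratio_of_isLocalMin hε hq hγ (fun i h => hγlam ⟨i, h⟩) hloc)

/-- The hyperparameter update step for the weights `γ` in the generalized
maximum-likelihood scheme with the max prior: the function
`f(γ) = ∑ᵢ [max{γ, λᵢ} qᵢ − αᵢ log max{γ, λᵢ}] + ε γ` attains its minimum over
`D = {γ ≥ 0 : max{γ, λᵢ} > 0 ∀ i}`, and every minimizer belongs to the finite set
`M₂` consisting of the values `λᵢ`, of `0`, and of the candidate stationary points
`(∑_{i : λᵢ ≤ λⱼ} αᵢ) / (∑_{i : λᵢ ≤ λⱼ} qᵢ + ε)`. -/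
theorem max_prior_gamma_update_minimizers
    (ι : Type) [Fintype ι] [Nonempty ι] (ε : ℝ) (hε : 0 < ε)
    (lam q α : ι → ℝ) (hlam : ∀ i, 0 ≤ lam i) (hq : ∀ i, 0 ≤ q i) (hα : ∀ i, 0 < α i) :
    let f : ℝ → ℝ := fun gam =>
      (∑ i : ι, (max gam (lam i) * q i - α i * Real.log (max gam (lam i)))) + ε * gam
    let D : Set ℝ := {gam | 0 ≤ gam ∧ ∀ i : ι, 0 < max gam (lam i)}
    let M : Set ℝ := Set.range lam ∪ {0} ∪
      Set.range (fun j : ι =>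
        (∑ i ∈ Finset.univ.filter fun i => lam i ≤ lam j, α i) /
          ((∑ i ∈ Finset.univ.filter fun i => lam i ≤ lam j, q i) + ε))
    (∃ gam ∈ D, ∀ μ ∈ D, f gam ≤ f μ) ∧
      ∀ gam ∈ D, (∀ μ ∈ D, f gam ≤ f μ) → gam ∈ M :=
  max_prior_gamma_update_minimizers_general ι ε hε lam q α hq hα
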